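/- arXiv:2012.06476 — 2 statements merged into one kernel-verified Lean document; each statement's English description precedes it below -/
import Mathlib

section
/- For every positive integer n, the number of representations r(n) of n as a sum of two squares of integers (counting signs and order) satisfies r(n) = 4∑_{d|n} χ₄(d), where χ₄ is the non-principal Dirichlet character modulo 4. -/
/-!
Count Gaussian integers of norm `n` instead of pairs. For a prime `p ∤ m`, this count `r`
satisfies `r (p ^ e * m) = (1 + χ₄ p + ⋯ + χ₄ p ^ e) * r m`: multiplication by `1 + i` is a
bijection from norm `m` onto norm `2 m`; an inert prime `p ≡ 3 (mod 4)` divides every Gaussian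
integer whose norm it divides, so `r (p ^ e * m)` is `r m` or `0` according to the parity of
`e`; and for `p = π π̄ ≡ 1 (mod 4)` every `z` of norm `p ^ e * m` is uniquely
`π ^ j π̄ ^ (e - j) w` with `N w = m`, because `π` divides neither `π̄` nor `w`. The divisor
sum of the completely multiplicative `χ₄` is multiplicative with the same local factors, and
`r 1 = 4`.
-/

/-- The non-principal Dirichlet character modulo 4, as a function on ℕ. -/
noncomputable def chi4 (d : ℕ) : ℤ :=
  if d % 4 = 1 then 1 else if d % 4 = 3 then -1 else 0

local notation "ℤ[i]" => GaussianInt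

theorem chi4_eq_χ₄ (d : ℕ) : chi4 d = ZMod.χ₄ d := by
  rw [ZMod.χ₄_nat_eq_if_mod_four, chi4]
  split_ifs <;> omega

theorem chi4_mul (m n : ℕ) : chi4 (m * n) = chi4 m * chi4 n := by
  simp only [chi4_eq_χ₄, Nat.cast_mul, map_mul]

open ArithmeticFunction in
theorem sum_divisors_chi4_mul {m n : ℕ} (hmn : m.Coprime n) :
    ∑ d ∈ (m * n).divisors, chi4 d =
      (∑ d ∈ m.divisors, chi4 d) * ∑ d ∈ n.divisors, chi4 d := by
  let χ : ArithmeticFunction ℤ := ⟨chi4, rfl⟩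
  have hχ : χ.IsMultiplicative := ⟨rfl, fun _ => chi4_mul _ _⟩
  have h := (hχ.mul isMultiplicative_zeta.natCast).map_mul_of_coprime hmn
  simp only [coe_mul_zeta_apply] at h
  exact h

theorem sum_divisors_chi4_prime_pow {p : ℕ} (hp : p.Prime) (e : ℕ) :
    ∑ d ∈ (p ^ e).divisors, chi4 d = ∑ i ∈ Finset.range (e + 1), chi4 p ^ i := by
  simp only [Nat.sum_divisors_prime_pow hp, chi4_eq_χ₄, Nat.cast_pow, map_pow]

theorem star_dvd_of_dvd_star {R : Type*} [CommSemiring R] [StarRing R] {a z : R}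
    (h : a ∣ star z) : star a ∣ z := by
  simpa [starRingEnd_apply] using map_dvd (starRingEnd R) h

namespace Zsqrtd

instance {d : ℤ} : IsLocalHom (normMonoidHom (d := d)) :=
  ⟨fun z hz => (isUnit_iff_norm_isUnit z).2 hz⟩

theorem norm_pow {d : ℤ} (z : Zsqrtd d) (n : ℕ) : (z ^ n).norm = z.norm ^ n :=
  map_pow normMonoidHom z n

end Zsqrtd

namespace GaussianInt

theorem prime_of_prime_norm {π : ℤ[i]} (h : Prime π.norm) : Prime π :=
  (Irreducible.of_map (f := Zsqrtd.normMonoidHom) h.irreducible).prime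

theorem norm_eq_of_norm_mul_eq {a w : ℤ[i]} {k : ℤ} (ha : a ≠ 0)
    (h : (a * w).norm = a.norm * k) : w.norm = k := by
  rw [Zsqrtd.norm_mul] at h
  exact mul_left_cancel₀ (norm_pos.2 ha).ne' h

theorem norm_eq_one_iff_mem {z : ℤ[i]} :
    z.norm = 1 ↔ z ∈ ({1, -1, ⟨0, 1⟩, ⟨0, -1⟩} : Finset ℤ[i]) := by
  refine ⟨fun h => ?_, fun h => by fin_cases h <;> rfl⟩
  obtain ⟨x, y⟩ := z
  rw [Zsqrtd.norm_def] at h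
  have hx : -1 ≤ x ∧ x ≤ 1 := by
    simp only at h; constructor <;> nlinarith [mul_self_nonneg x, mul_self_nonneg y]
  have hy : -1 ≤ y ∧ y ≤ 1 := by
    simp only at h; constructor <;> nlinarith [mul_self_nonneg x, mul_self_nonneg y]
  obtain ⟨hx₁, hx₂⟩ := hx
  obtain ⟨hy₁, hy₂⟩ := hy
  interval_cases x <;> interval_cases y <;> simp_all <;> decide

theorem natCast_dvd_of_dvd_norm {p : ℕ} (hp : Prime (p : ℤ[i])) {z : ℤ[i]}
    (h : (p : ℤ) ∣ z.norm) : (p : ℤ[i]) ∣ z := by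
  have hdvd : (p : ℤ[i]) ∣ z * star z := by
    rw [← Zsqrtd.norm_eq_mul_conj]
    exact_mod_cast (Zsqrtd.intCast_dvd_intCast (d := -1) _ _).2 h
  exact (hp.dvd_or_dvd hdvd).elim id fun h' => by simpa using star_dvd_of_dvd_star h'

theorem not_dvd_star_of_prime_norm {π : ℤ[i]} (hπ : Prime π.norm) (hodd : Odd π.norm) :
    ¬π ∣ star π := by
  rintro ⟨t, ht⟩
  have ht1 : t.norm = 1 := norm_eq_of_norm_mul_eq (prime_of_prime_norm hπ).ne_zero
    (by rw [← ht, Zsqrtd.norm_conj, mul_one])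
  obtain ⟨x, y⟩ := π
  simp only [Zsqrtd.norm_def] at hπ hodd
  rw [← Int.not_even_iff_odd] at hodd
  simp only [norm_eq_one_iff_mem, Finset.mem_insert, Finset.mem_singleton] at ht1
  rcases ht1 with rfl | rfl | rfl | rfl <;> simp [Zsqrtd.ext_iff] at ht
  · exact hπ.not_isSquare ⟨x, by rw [show y = 0 by linarith]; ring⟩
  · exact hπ.not_isSquare ⟨y, by rw [show x = 0 by linarith]; ring⟩
  · exact hodd ⟨x * x, by rw [show y = -x by linarith]; ring⟩
  · exact hodd ⟨x * x, by rw [show y = x by linarith]; ring⟩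

noncomputable def normCount (n : ℤ) : ℕ := Nat.card {z : ℤ[i] // z.norm = n}

theorem ncard_sq_add_sq_eq_normCount (n : ℤ) :
    Set.ncard {p : ℤ × ℤ | p.1 ^ 2 + p.2 ^ 2 = n} = normCount n := by
  rw [← Nat.card_coe_set_eq, Set.coe_ofPred, normCount]
  exact Nat.card_congr
    { toFun q := ⟨⟨q.1.1, q.1.2⟩, by rw [Zsqrtd.norm_def]; linear_combination q.2⟩
      invFun z := ⟨(z.1.re, z.1.im), by linear_combination (Zsqrtd.norm_def z.1).symm.trans z.2⟩
      left_inv _ := rfl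
      right_inv _ := rfl }

theorem normCount_one : normCount 1 = 4 := by
  simp only [normCount, norm_eq_one_iff_mem, Nat.card_eq_fintype_card, Fintype.card_coe]
  decide

theorem normCount_norm_mul {a : ℤ[i]} (ha : a ≠ 0) {k : ℤ}
    (hdvd : ∀ z : ℤ[i], z.norm = a.norm * k → a ∣ z) :
    normCount (a.norm * k) = normCount k := by
  refine (Nat.card_congr (Equiv.ofBijective
    (fun w => ⟨a * w.1, by rw [Zsqrtd.norm_mul, w.2]⟩ : {w : ℤ[i] // w.norm = k} → _)
    ⟨fun w w' h => Subtype.ext (mul_left_cancel₀ ha (congrArg Subtype.val h)), ?_⟩)).symm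
  rintro ⟨z, hz⟩
  obtain ⟨w, rfl⟩ := hdvd z hz
  exact ⟨⟨w, norm_eq_of_norm_mul_eq ha hz⟩, rfl⟩

theorem norm_one_add_I : (⟨1, 1⟩ : ℤ[i]).norm = 2 := rfl

theorem one_add_I_dvd_of_two_dvd_norm {z : ℤ[i]} (h : 2 ∣ z.norm) :
    (⟨1, 1⟩ : ℤ[i]) ∣ z := by
  have hsq : Even (z.re * z.re + z.im * z.im) := by
    rwa [show z.re * z.re + z.im * z.im = z.norm by rw [Zsqrtd.norm_def]; ring,
      even_iff_two_dvd]
  rw [Int.even_add, Int.even_mul, Int.even_mul, or_self, or_self] at hsq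
  obtain ⟨k, hk⟩ := Int.even_add.2 hsq
  exact ⟨⟨k, k - z.re⟩, Zsqrtd.ext (by simp) (by simp; linarith)⟩

theorem normCount_two_pow_mul (e : ℕ) (k : ℤ) : normCount (2 ^ e * k) = normCount k := by
  induction e with
  | zero => simp
  | succ e ih =>
    rw [pow_succ', mul_assoc, ← ih, ← norm_one_add_I, normCount_norm_mul (by decide)]
    exact fun z hz => one_add_I_dvd_of_two_dvd_norm (by rw [hz]; exact dvd_mul_right _ _)

section InertPrime

variable {p : ℕ} (hp : Prime (p : ℤ[i]))
include hp

theorem normCount_natCast_mul_eq_zero {k : ℤ} (hpk : ¬(p : ℤ) ∣ k) :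
    normCount (p * k) = 0 := by
  refine Nat.card_eq_zero.2 (Or.inl ⟨fun ⟨z, hz⟩ => hpk ?_⟩)
  obtain ⟨w, rfl⟩ := natCast_dvd_of_dvd_norm hp (hz ▸ dvd_mul_right _ _)
  rw [Zsqrtd.norm_mul, Zsqrtd.norm_natCast, mul_assoc] at hz
  exact ⟨w.norm, (mul_left_cancel₀ (by exact_mod_cast hp.ne_zero) hz).symm⟩

theorem normCount_natCast_sq_mul (k : ℤ) : normCount (p ^ 2 * k) = normCount k := by
  rw [sq, ← Zsqrtd.norm_natCast]
  refine normCount_norm_mul hp.ne_zero fun z hz => natCast_dvd_of_dvd_norm hp ?_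
  rw [hz, Zsqrtd.norm_natCast, mul_assoc]
  exact dvd_mul_right _ _

theorem normCount_natCast_pow_mul {k : ℤ} (hpk : ¬(p : ℤ) ∣ k) (e : ℕ) :
    (normCount (p ^ e * k) : ℤ) =
      (∑ i ∈ Finset.range (e + 1), (-1 : ℤ) ^ i) * normCount k := by
  induction e using Nat.twoStepInduction with
  | zero => simp
  | one => simp [normCount_natCast_mul_eq_zero hp hpk]
  | more e ih _ =>
    rw [show (p : ℤ) ^ (e + 2) * k = p ^ 2 * (p ^ e * k) by ring, normCount_natCast_sq_mul hp,
      ih, Finset.sum_range_succ _ (e + 2), Finset.sum_range_succ _ (e + 1), pow_succ]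
    ring

end InertPrime

section SplitPrime

variable {π : ℤ[i]} (hπ : Prime π)
include hπ

theorem exists_eq_pow_mul_star_pow_mul {e : ℕ} {z : ℤ[i]} {k : ℤ}
    (hz : z.norm = π.norm ^ e * k) :
    ∃ j ≤ e, ∃ w : ℤ[i], w.norm = k ∧ z = π ^ j * star π ^ (e - j) * w := by
  induction e generalizing z with
  | zero => exact ⟨0, le_rfl, z, by simpa using hz, by simp⟩
  | succ e ih =>
    have hdvd : π ∣ z * star z := by
      rw [← Zsqrtd.norm_eq_mul_conj, hz, pow_succ', mul_assoc]
      push_cast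
      rw [Zsqrtd.norm_eq_mul_conj, mul_assoc]
      exact dvd_mul_right _ _
    rw [pow_succ', mul_assoc] at hz
    rcases hπ.dvd_or_dvd hdvd with ⟨z₁, rfl⟩ | hstar
    · obtain ⟨j, hj, w, hw, rfl⟩ := ih (norm_eq_of_norm_mul_eq hπ.ne_zero hz)
      refine ⟨j + 1, by omega, w, hw, ?_⟩
      rw [Nat.add_sub_add_right]
      ring
    · obtain ⟨z₁, rfl⟩ := star_dvd_of_dvd_star hstar
      obtain ⟨j, hj, w, hw, rfl⟩ :=
        ih (norm_eq_of_norm_mul_eq (star_ne_zero.2 hπ.ne_zero) (by rwa [Zsqrtd.norm_conj]))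
      refine ⟨j, by omega, w, hw, ?_⟩
      rw [Nat.sub_add_comm hj]
      ring

theorem emultiplicity_pow_mul_star_pow_mul (hstar : ¬π ∣ star π) {w : ℤ[i]} (hw : ¬π ∣ w)
    (j l : ℕ) : emultiplicity π (π ^ j * star π ^ l * w) = j := by
  rw [mul_assoc, emultiplicity_mul hπ, emultiplicity_pow_self_of_prime hπ,
    emultiplicity_eq_zero.2, add_zero]
  intro h
  rcases hπ.dvd_or_dvd h with h | h
  exacts [hstar (hπ.dvd_of_dvd_pow h), hw h]

theorem normCount_norm_pow_mul (hstar : ¬π ∣ star π) {k : ℤ} (hk : ¬π.norm ∣ k) (e : ℕ) :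
    normCount (π.norm ^ e * k) = (e + 1) * normCount k := by
  have hw (w : {w : ℤ[i] // w.norm = k}) : ¬π ∣ w.1 := fun ⟨c, hc⟩ =>
    hk ⟨c.norm, by rw [← w.2, hc, Zsqrtd.norm_mul]⟩
  let f (jw : Fin (e + 1) × {w : ℤ[i] // w.norm = k}) :
      {z : ℤ[i] // z.norm = π.norm ^ e * k} :=
    ⟨π ^ (jw.1 : ℕ) * star π ^ (e - jw.1) * jw.2.1, by
      rw [Zsqrtd.norm_mul, Zsqrtd.norm_mul, Zsqrtd.norm_pow, Zsqrtd.norm_pow, Zsqrtd.norm_conj,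
        jw.2.2, ← pow_add, Nat.add_sub_cancel' (Nat.lt_succ_iff.1 jw.1.2)]⟩
  have hf : Function.Bijective f := by
    refine ⟨fun ⟨j, w⟩ ⟨j', w'⟩ h => ?_, fun ⟨z, hz⟩ => ?_⟩
    · have hz := congrArg Subtype.val h
      have hj : j = j' := by
        have := congrArg (emultiplicity π) hz
        rwa [emultiplicity_pow_mul_star_pow_mul hπ hstar (hw w),
          emultiplicity_pow_mul_star_pow_mul hπ hstar (hw w'), Nat.cast_inj, Fin.val_inj] at this
      subst hj
      exact Prod.ext rfl (Subtype.ext (mul_left_cancel₀ (by simp [hπ.ne_zero]) hz))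
    · obtain ⟨j, hj, w, hw, rfl⟩ := exists_eq_pow_mul_star_pow_mul hπ hz
      exact ⟨(⟨j, by omega⟩, ⟨w, hw⟩), rfl⟩
  rw [normCount, ← Nat.card_congr (Equiv.ofBijective f hf), Nat.card_prod, Nat.card_fin,
    normCount]

end SplitPrime

theorem normCount_prime_pow_mul_of_mod_four_eq_one {p : ℕ} (hp : p.Prime) (hp1 : p % 4 = 1)
    {k : ℤ} (hpk : ¬(p : ℤ) ∣ k) (e : ℕ) :
    normCount (p ^ e * k) = (e + 1) * normCount k := by
  have := Fact.mk hp
  obtain ⟨a, b, hab⟩ := Nat.Prime.sq_add_sq (p := p) (by omega)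
  have hπ : (⟨a, b⟩ : ℤ[i]).norm = p := by
    rw [Zsqrtd.norm_def, ← hab]
    push_cast
    ring
  have hprime : Prime (⟨a, b⟩ : ℤ[i]).norm := hπ ▸ Nat.prime_iff_prime_int.1 hp
  have hodd : Odd (⟨a, b⟩ : ℤ[i]).norm := by
    rw [hπ, Int.odd_coe_nat, Nat.odd_iff]
    omega
  rw [← hπ] at hpk ⊢
  exact normCount_norm_pow_mul (prime_of_prime_norm hprime)
    (not_dvd_star_of_prime_norm hprime hodd) hpk e

theorem normCount_prime_pow_mul {p m : ℕ} (hp : p.Prime) (hpm : ¬p ∣ m) (e : ℕ) :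
    (normCount (p ^ e * m : ℕ) : ℤ) = (∑ d ∈ (p ^ e).divisors, chi4 d) * normCount m := by
  have hpk : ¬(p : ℤ) ∣ m := by exact_mod_cast hpm
  rw [sum_divisors_chi4_prime_pow hp]
  push_cast
  rcases hp.eq_two_or_odd' with rfl | hodd
  · simp [chi4, Finset.sum_range_succ', normCount_two_pow_mul]
  obtain hp1 | hp3 : p % 4 = 1 ∨ p % 4 = 3 := by rw [Nat.odd_iff] at hodd; omega
  · simp [chi4, hp1, normCount_prime_pow_mul_of_mod_four_eq_one hp hp1 hpk]
  · have := Fact.mk hp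
    simp only [chi4, hp3]
    exact normCount_natCast_pow_mul (prime_of_nat_prime_of_mod_four_eq_three p hp3) hpk e

theorem normCount_eq_four_mul_sum_divisors_chi4 {n : ℕ} (hn : 0 < n) :
    (normCount n : ℤ) = 4 * ∑ d ∈ n.divisors, chi4 d := by
  induction n using Nat.recOnPrimePow with
  | zero => omega
  | one => simp [normCount_one, chi4]
  | prime_pow_mul m p e hp hpm _ ih =>
    rw [normCount_prime_pow_mul hp hpm, ih (Nat.pos_of_mul_pos_left hn),
      sum_divisors_chi4_mul ((hp.coprime_iff_not_dvd.2 hpm).pow_left e)]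
    ring

end GaussianInt

/-- For every positive integer `n`, the number of representations of `n` as an ordered
sum of two squares of integers equals `4 * ∑_{d ∣ n} χ₄(d)`. -/
theorem sum_two_squares_count (n : ℕ) (hn : 0 < n) :
    (Set.ncard {p : ℤ × ℤ | p.1 ^ 2 + p.2 ^ 2 = (n : ℤ)} : ℤ)
      = 4 * ∑ d ∈ n.divisors, chi4 d := by
  rw [GaussianInt.ncard_sq_add_sq_eq_normCount,
    GaussianInt.normCount_eq_four_mul_sum_divisors_chi4 hn]
end

section
/- Let X ≥ 2, k = ⌊log X⌋, ε > 0, H = (log X)²/ε, and suppose |Θ(t)| ≤ (1/(π|t|))·(k/(2π|t|·(ε/10)))^k for all t ≠ 0. Then for any function S with |S(t)| ≤ X log X for all t, one has |∫_{|t|>H} Θ(t) S(t)⁴ dt| ≪ 1 for X sufficiently large, with an absolute implied constant. -/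
/-!
On `|t| > H` the bound on `Θ` is `(1/π) c^k |t|^{-(k+1)}` with `c = 5k/(πε)`, whose tail integral
is `2 c^k / (π k H^k)`; with `|S|⁴ ≤ (X log X)⁴` the tail is at most
`2/(πk) · (c/H)^k · (X log X)⁴`. For `H = (log X)²/ε` the ratio `c/H = 5k/(π (log X)²)` no longer
depends on `ε` and is below `e⁻⁵` once `log X ≥ 3000`, so `(c/H)^k ≤ e^{5 - 5 log X}`, which beats
`X⁴ (log X)⁴ = e^{4 log X} (log X)⁴`.
-/

open Real MeasureTheory Set

theorem measurableSet_lt_abs (H : ℝ) : MeasurableSet {t : ℝ | H < |t|} :=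
  measurableSet_lt measurable_const measurable_abs

theorem setIntegral_abs_rpow_neg_tail {H s : ℝ} (hH : 0 < H) (hs : 1 < s) :
    ∫ t in {t : ℝ | H < |t|}, |t| ^ (-s) = 2 * (H ^ (1 - s) / (s - 1)) := by
  have hind : ∀ t : ℝ, {t : ℝ | H < |t|}.indicator (fun t => |t| ^ (-s)) t
      = (Ioi H).indicator (fun x => x ^ (-s)) |t| := fun t => by
    by_cases ht : H < |t| <;> simp [indicator, ht]
  rw [← integral_indicator (measurableSet_lt_abs H)]
  simp_rw [hind]
  rw [integral_comp_abs (f := (Ioi H).indicator (fun x => x ^ (-s))),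
    setIntegral_indicator measurableSet_Ioi, Ioi_inter_Ioi, max_eq_right hH.le,
    integral_Ioi_rpow_of_lt (by linarith) hH]
  congr 1
  rw [show -s + 1 = 1 - s by ring, ← neg_div_neg_eq, neg_neg, neg_sub]

theorem integrableOn_abs_rpow_neg_tail {H s : ℝ} (hH : 0 < H) (hs : 1 < s) :
    IntegrableOn (fun t : ℝ => |t| ^ (-s)) {t : ℝ | H < |t|} :=
  -- a non-integrable function has integral `0`
  .of_integral_ne_zero <| by
    rw [setIntegral_abs_rpow_neg_tail hH hs]
    have : 0 < s - 1 := by linarith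
    positivity

theorem div_mul_div_pow_eq_rpow_neg {u : ℝ} (hu : 0 < u) (A c : ℝ) (k : ℕ) :
    A / u * (c / u) ^ k = A * c ^ k * u ^ (-(k + 1 : ℝ)) := by
  rw [rpow_neg hu.le, show (k + 1 : ℝ) = ((k + 1 : ℕ) : ℝ) by push_cast; ring, rpow_natCast,
    div_pow]
  field_simp
  ring

theorem norm_setIntegral_tail_le {Θ F : ℝ → ℂ} {H A c M : ℝ} {k : ℕ} (hH : 0 < H) (hk : 0 < k)
    (hΘ : ∀ t, H < |t| → ‖Θ t‖ ≤ A / |t| * (c / |t|) ^ k) (hF : ∀ t, ‖F t‖ ≤ M) :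
    ‖∫ t in {t : ℝ | H < |t|}, Θ t * F t‖ ≤ 2 * A * M * (c / H) ^ k / k := by
  have hs : (1 : ℝ) < k + 1 := by simp [hk]
  have hbound : ∀ t ∈ {t : ℝ | H < |t|}, ‖Θ t * F t‖ ≤ A * c ^ k * M * |t| ^ (-(k + 1 : ℝ)) := by
    intro t ht
    have hbound_nonneg : 0 ≤ A / |t| * (c / |t|) ^ k := (norm_nonneg _).trans (hΘ t ht)
    calc ‖Θ t * F t‖ = ‖Θ t‖ * ‖F t‖ := norm_mul _ _
      _ ≤ A / |t| * (c / |t|) ^ k * M := mul_le_mul (hΘ t ht) (hF t) (norm_nonneg _) hbound_nonneg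
      _ = A * c ^ k * M * |t| ^ (-(k + 1 : ℝ)) := by
        rw [div_mul_div_pow_eq_rpow_neg (hH.trans ht)]; ring
  calc ‖∫ t in {t : ℝ | H < |t|}, Θ t * F t‖
      ≤ ∫ t in {t : ℝ | H < |t|}, A * c ^ k * M * |t| ^ (-(k + 1 : ℝ)) :=
        norm_integral_le_of_norm_le ((integrableOn_abs_rpow_neg_tail hH hs).const_mul _)
          (ae_restrict_of_forall_mem (measurableSet_lt_abs H) hbound)
    _ = 2 * A * M * (c / H) ^ k / k := by
        rw [integral_const_mul, setIntegral_abs_rpow_neg_tail hH hs,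
          show 1 - (k + 1 : ℝ) = -(k : ℝ) by ring, rpow_neg hH.le, rpow_natCast, div_pow]
        field_simp [(Nat.cast_ne_zero.mpr hk.ne' : (k : ℝ) ≠ 0)]
        ring

theorem exp_five_lt : exp 5 < 243 :=
  calc exp 5 = exp 1 ^ 5 := by rw [← exp_nat_mul]; norm_num
    _ < 3 ^ 5 := by gcongr; exact exp_one_lt_three
    _ = 243 := by norm_num

theorem tail_bound_le_one {L : ℝ} {k : ℕ} (hL : 3000 ≤ L) (hkL : (k : ℝ) ≤ L)
    (hLk : L ≤ k + 1) :
    2 * (1 / π) * (exp L * L) ^ 4 * (5 * k / (π * L ^ 2)) ^ k / k ≤ 1 := by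
  have hπ : 3 < π := pi_gt_three
  have hk : 2999 ≤ (k : ℝ) := by linarith
  have hratio : 5 * k / (π * L ^ 2) ≤ exp (-5) := by
    rw [exp_neg, div_le_iff₀ (by positivity), ← div_eq_inv_mul, le_div_iff₀ (exp_pos 5)]
    nlinarith [exp_five_lt, mul_le_mul hπ.le hL (by norm_num) (by positivity)]
  have hpow : (5 * k / (π * L ^ 2)) ^ k ≤ exp (5 - 5 * L) :=
    calc (5 * k / (π * L ^ 2)) ^ k ≤ exp (-5) ^ k := by gcongr
      _ = exp (-5 * k) := by rw [← exp_nat_mul]; ring_nf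
      _ ≤ exp (5 - 5 * L) := exp_le_exp.mpr (by linarith)
  have hL5 : L ^ 5 ≤ 120 * exp L := by
    have := pow_div_factorial_le_exp L (by linarith) 5
    norm_num [Nat.factorial] at this
    linarith
  have hkL' : 2 * 243 * 120 ≤ π * k * L := by
    have : 3 * 2999 ≤ π * k := by nlinarith
    nlinarith
  calc 2 * (1 / π) * (exp L * L) ^ 4 * (5 * k / (π * L ^ 2)) ^ k / k
      ≤ 2 * (1 / π) * (exp L * L) ^ 4 * exp (5 - 5 * L) / k := by gcongr
    _ = 2 * exp 5 * L ^ 5 / (π * k * L * exp L) := by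
        rw [mul_pow, ← exp_nat_mul, exp_sub, show 5 * L = L + (4 : ℕ) * L by push_cast; ring,
          exp_add]
        field_simp
    _ ≤ 1 := by
        rw [div_le_one (by positivity)]
        calc 2 * exp 5 * L ^ 5 ≤ 2 * 243 * (120 * exp L) := by
              gcongr
              exact exp_five_lt.le
          _ ≤ π * k * L * exp L := by nlinarith [exp_pos L]

/-- Tail estimate: with `k = ⌊log X⌋`, `H = (log X)²/ε` and
`|Θ(t)| ≤ (1/(π|t|)) (k/(2π|t|(ε/10)))^k`, any `S` with `|S(t)| ≤ X log X` satisfies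
`|∫_{|t|>H} Θ(t) S(t)⁴ dt| ≪ 1` for `X` sufficiently large, absolute implied constant. -/
theorem tail_of_smoothed_integral :
    ∃ C : ℝ, 0 < C ∧ ∃ X₀ : ℝ, ∀ X : ℝ, X₀ ≤ X → ∀ ε : ℝ, 0 < ε → ∀ Θ S : ℝ → ℂ,
      (∀ t : ℝ, t ≠ 0 →
          ‖Θ t‖ ≤ 1 / (Real.pi * |t|) *
            ((⌊Real.log X⌋₊ : ℝ) / (2 * Real.pi * |t| * (ε / 10))) ^ (⌊Real.log X⌋₊)) →
      (∀ t : ℝ, ‖S t‖ ≤ X * Real.log X) →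
      ‖∫ t in {t : ℝ | Real.log X ^ 2 / ε < |t|}, Θ t * S t ^ 4‖ ≤ C := by
  refine ⟨1, one_pos, exp 3000, fun X hX ε hε Θ S hΘ hS => ?_⟩
  set L := log X
  set k := ⌊L⌋₊
  have hX0 : 0 < X := (exp_pos _).trans_le hX
  have hL : 3000 ≤ L := (le_log_iff_exp_le hX0).mpr hX
  have hkL : (k : ℝ) ≤ L := Nat.floor_le (by linarith)
  have hLk : L ≤ k + 1 := (Nat.lt_floor_add_one L).le
  have hk : 0 < k := Nat.floor_pos.mpr (by linarith)
  have hH : 0 < L ^ 2 / ε := by positivity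
  have hΘ' : ∀ t, L ^ 2 / ε < |t| →
      ‖Θ t‖ ≤ 1 / π / |t| * (k / (2 * π * (ε / 10)) / |t|) ^ k := fun t ht => by
    convert hΘ t (abs_pos.mp (hH.trans ht)) using 1
    ring
  have hS' : ∀ t, ‖S t ^ 4‖ ≤ (X * L) ^ 4 := fun t => by
    rw [norm_pow]; exact pow_le_pow_left₀ (norm_nonneg _) (hS t) 4
  refine (norm_setIntegral_tail_le hH hk hΘ' hS').trans ?_
  have hratio : k / (2 * π * (ε / 10)) / (L ^ 2 / ε) = 5 * k / (π * L ^ 2) := by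
    field_simp; ring
  rw [hratio, ← exp_log hX0]
  exact tail_bound_le_one hL hkL hLk
end
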